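/- In the good/bad/ugly setting, for every i with 0 ≤ i ≤ m one has ‖good^i‖ ≥ 1 − ‖ugly^i‖. In particular, if ε ≥ 0 and ‖Π_bad A^j‖ ≤ ε for all 1 ≤ j ≤ i, then ‖good^i‖ ≥ 1 − i·ε. -/

import Mathlib

/-!
Since the gates are isometries and `good` plus `ugly` obey the same recursion as the state,
`A i = good i + ugly i` with `‖A i‖ = 1`, whence `‖good i‖ ≥ 1 - ‖ugly i‖`. Rewriting the recursion
as `ugly (i+1) = P (A (i+1)) + (1 - P) (C (i+1) (ugly i))` and using that the orthogonal
projection `1 - P` is a contraction gives `‖ugly i‖ ≤ i ε`.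
-/

open scoped InnerProductSpace

section Projection

variable {𝕜 E : Type*} [RCLike 𝕜] [NormedAddCommGroup E] [InnerProductSpace 𝕜 E]

theorem norm_sub_apply_le_of_idempotent_of_symmetric (P : E → E)
    (hidem : ∀ x, P (P x) = P x) (hsymm : ∀ x y, ⟪P x, y⟫_𝕜 = ⟪x, P y⟫_𝕜) (x : E) :
    ‖x - P x‖ ≤ ‖x‖ := by
  have horth : ⟪P x, x - P x⟫_𝕜 = 0 := by
    rw [inner_sub_right, hsymm x (P x), hidem, hsymm x x, sub_self]
  have hpyth := norm_add_sq_eq_norm_sq_add_norm_sq_of_inner_eq_zero _ _ horth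
  rw [add_sub_cancel] at hpyth
  nlinarith [norm_nonneg (P x), norm_nonneg (x - P x), norm_nonneg x]

end Projection

section GoodBadUgly

variable {𝕜 E : Type*} [RCLike 𝕜] [NormedAddCommGroup E] [InnerProductSpace 𝕜 E]
  {m : ℕ} {C : ℕ → E →ₗᵢ[𝕜] E} {P : E →L[𝕜] E} {A good ugly : ℕ → E}

theorem eq_good_add_ugly (hA0 : A 0 = good 0 + ugly 0)
    (hA : ∀ i, 1 ≤ i → i ≤ m → A i = C i (A (i - 1)))
    (hgood : ∀ i, 1 ≤ i → i ≤ m → good i = C i (good (i - 1)) - P (C i (good (i - 1))))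
    (hugly : ∀ i, 1 ≤ i → i ≤ m → ugly i = P (C i (good (i - 1))) + C i (ugly (i - 1))) :
    ∀ i ≤ m, A i = good i + ugly i
  | 0, _ => hA0
  | i + 1, hi => by
    rw [hA _ le_add_self hi, hgood _ le_add_self hi, hugly _ le_add_self hi, Nat.add_sub_cancel,
      eq_good_add_ugly hA0 hA hgood hugly i (by omega), map_add]
    abel

theorem norm_eq_of_isometric_steps (hA : ∀ i, 1 ≤ i → i ≤ m → A i = C i (A (i - 1))) :
    ∀ i ≤ m, ‖A i‖ = ‖A 0‖
  | 0, _ => rfl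
  | i + 1, hi => by
    rw [hA _ le_add_self hi, Nat.add_sub_cancel, LinearIsometry.norm_map,
      norm_eq_of_isometric_steps hA i (by omega)]

theorem norm_ugly_le (hidem : ∀ x, P (P x) = P x) (hsymm : ∀ x y, ⟪P x, y⟫_𝕜 = ⟪x, P y⟫_𝕜)
    (hA0 : A 0 = good 0 + ugly 0) (hugly0 : ugly 0 = 0)
    (hA : ∀ i, 1 ≤ i → i ≤ m → A i = C i (A (i - 1)))
    (hgood : ∀ i, 1 ≤ i → i ≤ m → good i = C i (good (i - 1)) - P (C i (good (i - 1))))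
    (hugly : ∀ i, 1 ≤ i → i ≤ m → ugly i = P (C i (good (i - 1))) + C i (ugly (i - 1)))
    {ε : ℝ} : ∀ i ≤ m, (∀ j, 1 ≤ j → j ≤ i → ‖P (A j)‖ ≤ ε) → ‖ugly i‖ ≤ i * ε
  | 0, _, _ => by simp [hugly0]
  | i + 1, hi, hPA => by
    have hdecomp := eq_good_add_ugly hA0 hA hgood hugly i (by omega)
    have hstep : ugly (i + 1) = P (A (i + 1)) + (C (i + 1) (ugly i) - P (C (i + 1) (ugly i))) := by
      rw [hugly _ le_add_self hi, hA _ le_add_self hi, Nat.add_sub_cancel, hdecomp, map_add,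
        map_add]
      abel
    have hprev := norm_ugly_le hidem hsymm hA0 hugly0 hA hgood hugly i (by omega)
      fun j hj hji => hPA j hj (by omega)
    calc ‖ugly (i + 1)‖
        ≤ ‖P (A (i + 1))‖ + ‖C (i + 1) (ugly i) - P (C (i + 1) (ugly i))‖ := by
          rw [hstep]; exact norm_add_le _ _
      _ ≤ ε + ‖C (i + 1) (ugly i)‖ :=
          add_le_add (hPA _ le_add_self le_rfl) (norm_sub_apply_le_of_idempotent_of_symmetric
            P hidem hsymm _)
      _ ≤ ((i + 1 : ℕ) : ℝ) * ε := by
          rw [LinearIsometry.norm_map]; push_cast; linarith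

end GoodBadUgly

theorem welded_tree_good_lower_bound
    {{H : Type*}} [NormedAddCommGroup H] [InnerProductSpace ℂ H]
    (m : ℕ) (C : ℕ → (H ≃ₗᵢ[ℂ] H))
    (P : H →L[ℂ] H)
    (hPidem : ∀ x : H, P (P x) = P x)
    (hPsa : ∀ x y : H, (inner ℂ (P x) y : ℂ) = inner ℂ x (P y))
    (ψ0 : H) (hψ0 : ‖ψ0‖ = 1) (hψ0bad : P ψ0 = 0)
    (A good bad ugly : ℕ → H)
    (hA0 : A 0 = ψ0)
    (hA : ∀ i : ℕ, 1 ≤ i → i ≤ m → A i = C i (A (i - 1)))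
    (hgood0 : good 0 = ψ0) (hbad0 : bad 0 = 0) (hugly0 : ugly 0 = 0)
    (hgood : ∀ i : ℕ, 1 ≤ i → i ≤ m →
      good i = C i (good (i - 1)) - P (C i (good (i - 1))))
    (hbad : ∀ i : ℕ, 1 ≤ i → i ≤ m → bad i = P (C i (good (i - 1))))
    (hugly : ∀ i : ℕ, 1 ≤ i → i ≤ m → ugly i = bad i + C i (ugly (i - 1))) :
    ∀ i : ℕ, i ≤ m →
      1 - ‖ugly i‖ ≤ ‖good i‖ ∧
      ∀ ε : ℝ, 0 ≤ ε → (∀ j : ℕ, 1 ≤ j → j ≤ i → ‖P (A j)‖ ≤ ε) →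
        1 - (i : ℝ) * ε ≤ ‖good i‖ := by
  let C' i := (C i).toLinearIsometry
  have hA' : ∀ i, 1 ≤ i → i ≤ m → A i = C' i (A (i - 1)) := hA
  have hA0' : A 0 = good 0 + ugly 0 := by rw [hA0, hgood0, hugly0, add_zero]
  have hugly' : ∀ i, 1 ≤ i → i ≤ m → ugly i = P (C' i (good (i - 1))) + C' i (ugly (i - 1)) :=
    fun i h1 hi => by rw [hugly i h1 hi, hbad i h1 hi]; rfl
  intro i hi
  have hnorm : ‖A i‖ = 1 := by rw [norm_eq_of_isometric_steps hA' i hi, hA0, hψ0]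
  have hlower : 1 - ‖ugly i‖ ≤ ‖good i‖ := by
    have := norm_sub_norm_le (A i) (ugly i)
    rw [hnorm, eq_good_add_ugly hA0' hA' hgood hugly' i hi, add_sub_cancel_right] at this
    exact this
  refine ⟨hlower, fun ε _ hPA => ?_⟩
  linarith [norm_ugly_le hPidem hPsa hA0' hugly0 hA' hgood hugly' i hi hPA]
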